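/- arXiv:2308.14926 — 2 statements merged into one kernel-verified Lean document; each statement's English description precedes it below -/
import Mathlib

section
/- Let V be a 1-VASS (a VASS of dimension d=1) with configurations s(m) and t(n), m,n∈ℕ. Then t(n) is coverable from s(m) in V under monus semantics if and only if t(n) is coverable from s(m) in V under classical semantics, or there is a state q of V such that t(n) is coverable from q(0) in V under classical semantics and s(m) is coverable from q(0) in rev(V) under classical semantics. -/
/-- A transition of a `d`-dimensional VASS over state set `Q`:
a source state, an update vector in `ℤ^d`, and a target state. -/
abbrev VTrans (d : ℕ) (Q : Type*) := Q × (Fin d → ℤ) × Q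

/-- A vector addition system with states (VASS), given by its set of transitions. -/
structure VASS (d : ℕ) (Q : Type*) where
  Δ : Set (VTrans d Q)

variable {d : ℕ} {Q : Type*}

/-- A sequence of transitions is a path if consecutive states match. -/
def IsPath (ρ : List (VTrans d Q)) : Prop := ρ.Chain' (fun t t' => t.2.2 = t'.1)

/-- A path of the VASS `V`. -/
def PathIn (V : VASS d Q) (ρ : List (VTrans d Q)) : Prop :=
  IsPath ρ ∧ ∀ t ∈ ρ, t ∈ V.Δ

/-- The path starts at state `s` (any state works for the empty path). -/
def FromState (s : Q) (ρ : List (VTrans d Q)) : Prop :=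
  match ρ with
  | [] => True
  | t :: _ => t.1 = s

/-- The last state of the run induced by `ρ` from state `s`. -/
def endState (s : Q) (ρ : List (VTrans d Q)) : Q := (ρ.map (fun t => t.2.2)).getLastD s

/-- Cast a vector over `ℕ` to a vector over `ℤ`. -/
def ofNatVec (v : Fin d → ℕ) : Fin d → ℤ := fun j => (v j : ℤ)

/-- The `i`-th vector of the ℤ-run induced by the path `ρ` from initial vector `v`. -/
def zrun (v : Fin d → ℤ) (ρ : List (VTrans d Q)) (i : ℕ) : Fin d → ℤ :=
  v + ((ρ.take i).map (fun t => t.2.1)).sum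

/-- The last vector of the ℤ-run induced by `ρ` from `v`. -/
def zend (v : Fin d → ℤ) (ρ : List (VTrans d Q)) : Fin d → ℤ := zrun v ρ ρ.length

/-- One step of the monus semantics: add `z` and truncate at `0` componentwise. -/
def mstep (v : Fin d → ℕ) (z : Fin d → ℤ) : Fin d → ℕ := fun j => ((v j : ℤ) + z j).toNat

/-- The `i`-th vector of the monus run induced by the path `ρ` from initial vector `v`. -/
def mrun (v : Fin d → ℕ) (ρ : List (VTrans d Q)) (i : ℕ) : Fin d → ℕ :=
  (ρ.take i).foldl (fun u t => mstep u t.2.1) v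

/-- The last vector of the monus run induced by `ρ` from `v`. -/
def mend (v : Fin d → ℕ) (ρ : List (VTrans d Q)) : Fin d → ℕ := mrun v ρ ρ.length

/-- The classical run induced by `ρ` from `v` exists: no value of the ℤ-run
drops below zero in any coordinate. -/
def ClassicalOK (v : Fin d → ℕ) (ρ : List (VTrans d Q)) : Prop :=
  ∀ i ≤ ρ.length, ∀ j, 0 ≤ zrun (ofNatVec v) ρ i j

/-- Classical reachability `s(v) →* t(w)`. -/
def ClassicalReach (V : VASS d Q) (s : Q) (v : Fin d → ℕ) (t : Q) (w : Fin d → ℕ) : Prop :=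
  ∃ ρ, PathIn V ρ ∧ FromState s ρ ∧ endState s ρ = t ∧ ClassicalOK v ρ ∧
    zend (ofNatVec v) ρ = ofNatVec w

/-- Reachability in ℤ-semantics `s(v) →ℤ* t(w)`. -/
def ZReach (V : VASS d Q) (s : Q) (v : Fin d → ℤ) (t : Q) (w : Fin d → ℤ) : Prop :=
  ∃ ρ, PathIn V ρ ∧ FromState s ρ ∧ endState s ρ = t ∧ zend v ρ = w

/-- Reachability in monus semantics `s(v) ⇝* t(w)`. -/
def MonusReach (V : VASS d Q) (s : Q) (v : Fin d → ℕ) (t : Q) (w : Fin d → ℕ) : Prop :=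
  ∃ ρ, PathIn V ρ ∧ FromState s ρ ∧ endState s ρ = t ∧ mend v ρ = w

/-- Coordinate `j` hits `0` in the ℤ-run (equivalently, classical run) induced
by `ρ` from `v` (at some index `1 ≤ i ≤ k`). -/
def HitsZeroZ (v : Fin d → ℤ) (ρ : List (VTrans d Q)) (j : Fin d) : Prop :=
  ∃ i, 1 ≤ i ∧ i ≤ ρ.length ∧ zrun v ρ i j = 0

/-- Coordinate `j` hits `0` in the monus run induced by `ρ` from `v`. -/
def HitsZeroM (v : Fin d → ℕ) (ρ : List (VTrans d Q)) (j : Fin d) : Prop :=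
  ∃ i, 1 ≤ i ∧ i ≤ ρ.length ∧ mrun v ρ i j = 0

/-- The monus run induced by `ρ` from `v` is lossy: at some step, for some
coordinate, the actual change differs from the transition's update. -/
def Lossy (v : Fin d → ℕ) (ρ : List (VTrans d Q)) : Prop :=
  ∃ (i : Fin ρ.length) (j : Fin d),
    (mrun v ρ ((i : ℕ) + 1) j : ℤ) ≠ (mrun v ρ (i : ℕ) j : ℤ) + (ρ.get i).2.1 j

/-- `mi ρ s₀ v₀`: the coordinatewise minimum (with `0`) of all values along
the ℤ-run induced by `ρ` from `v`. -/
def mi (v : Fin d → ℤ) (ρ : List (VTrans d Q)) : Fin d → ℤ :=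
  fun j => min 0 ((Finset.range (ρ.length + 1)).inf' Finset.nonempty_range_add_one
    (fun i => zrun v ρ i j))

/-- The reverse VASS: `(p,z,q)` is a transition iff `(q,-z,p)` is one of `V`. -/
def revV (V : VASS d Q) : VASS d Q := ⟨{tr | (tr.2.2, -tr.2.1, tr.1) ∈ V.Δ}⟩

/-- Coverability in monus semantics. -/
def MonusCover (V : VASS d Q) (s : Q) (v : Fin d → ℕ) (t : Q) (w : Fin d → ℕ) : Prop :=
  ∃ w', w ≤ w' ∧ MonusReach V s v t w'

/-- Coverability in classical semantics. -/
def ClassicalCover (V : VASS d Q) (s : Q) (v : Fin d → ℕ) (t : Q) (w : Fin d → ℕ) : Prop :=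
  ∃ w', w ≤ w' ∧ ClassicalReach V s v t w'

/-! In a 1-VASS a monus run that ever truncates has counter `0` right after its last
truncation, and from there on it is a classical run. Before that point, the monus run read
backwards is dominated by the classical run of the reversed path from `0`, since every monus
step `u ↦ max (u + z) 0` satisfies `u ≤ max (u + z) 0 - z`. Conversely, monus runs are
monotone in the initial counter and a classical run is a monus run, so the monus run along
the reversed `rev(V)`-path followed by the classical run from `q(0)` covers `t(n)`. -/

section Paths

variable {V : VASS d Q} {s : Q} {a : VTrans d Q} {l ρ ρ₁ ρ₂ : List (VTrans d Q)}

def flipTrans (a : VTrans d Q) : VTrans d Q := (a.2.2, -a.2.1, a.1)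

def revPath (ρ : List (VTrans d Q)) : List (VTrans d Q) := (ρ.map flipTrans).reverse

lemma revPath_cons : revPath (a :: l) = revPath l ++ [flipTrans a] := by
  simp [revPath]

lemma revPath_concat : revPath (l ++ [a]) = flipTrans a :: revPath l := by
  simp [revPath]

lemma revV_revV (V : VASS d Q) : revV (revV V) = V := by
  obtain ⟨Δ⟩ := V
  simp only [revV, VASS.mk.injEq]
  ext ⟨p, z, q⟩
  simp

lemma endState_concat : endState s (l ++ [a]) = a.2.2 := by
  simp [endState]

lemma endState_append : endState s (ρ₁ ++ ρ₂) = endState (endState s ρ₁) ρ₂ := by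
  rcases List.eq_nil_or_concat ρ₂ with rfl | ⟨l, a, rfl⟩
  · simp [endState]
  · rw [List.concat_eq_append, ← List.append_assoc, endState_concat, endState_concat]

lemma FromState.of_append (h : FromState s (ρ₁ ++ ρ₂)) : FromState s ρ₁ := by
  cases ρ₁ with
  | nil => trivial
  | cons a l => exact h

lemma FromState.append (h₁ : FromState s ρ₁) (h₂ : FromState (endState s ρ₁) ρ₂) :
    FromState s (ρ₁ ++ ρ₂) := by
  cases ρ₁ with
  | nil => exact h₂
  | cons a l => exact h₁

lemma FromState.endState_of_append (hρ : IsPath (ρ₁ ++ ρ₂)) (h : FromState s (ρ₁ ++ ρ₂)) :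
    FromState (endState s ρ₁) ρ₂ := by
  rcases List.eq_nil_or_concat ρ₁ with rfl | ⟨l, a, rfl⟩
  · exact h
  cases ρ₂ with
  | nil => trivial
  | cons b l₂ =>
    rw [List.concat_eq_append] at hρ ⊢
    rw [endState_concat]
    exact ((List.isChain_append.1 hρ).2.2 a (by simp) b (by simp)).symm

lemma PathIn.of_append_left (h : PathIn V (ρ₁ ++ ρ₂)) : PathIn V ρ₁ :=
  ⟨h.1.prefix (List.prefix_append ρ₁ ρ₂), fun x hx => h.2 x (List.mem_append_left ρ₂ hx)⟩

lemma PathIn.of_append_right (h : PathIn V (ρ₁ ++ ρ₂)) : PathIn V ρ₂ :=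
  ⟨h.1.suffix (List.suffix_append ρ₁ ρ₂), fun x hx => h.2 x (List.mem_append_right ρ₁ hx)⟩

lemma PathIn.append (h₁ : PathIn V ρ₁) (h₂ : PathIn V ρ₂)
    (hglue : FromState (endState s ρ₁) ρ₂) : PathIn V (ρ₁ ++ ρ₂) := by
  refine ⟨?_, fun x hx => (List.mem_append.1 hx).elim (h₁.2 x) (h₂.2 x)⟩
  rcases List.eq_nil_or_concat ρ₁ with rfl | ⟨l, a, rfl⟩
  · exact h₂.1
  cases ρ₂ with
  | nil => simpa using h₁.1
  | cons b l₂ =>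
    rw [List.concat_eq_append, endState_concat] at hglue
    refine List.isChain_append.2 ⟨h₁.1, h₂.1, fun x hx y hy => ?_⟩
    simp only [List.concat_eq_append, List.getLast?_concat, Option.mem_def,
      Option.some.injEq, List.head?_cons] at hx hy
    rw [← hx, ← hy, hglue]

lemma PathIn.revPath (h : PathIn V ρ) : PathIn (revV V) (revPath ρ) := by
  refine ⟨?_, fun x hx => ?_⟩
  · refine List.isChain_reverse.2 (List.isChain_map _ |>.2 ?_)
    exact h.1.imp fun _ _ hab => hab.symm
  · simp only [_root_.revPath, List.mem_reverse, List.mem_map] at hx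
    obtain ⟨a, ha, rfl⟩ := hx
    simpa [revV, flipTrans] using h.2 a ha

lemma fromState_revPath (s : Q) (ρ : List (VTrans d Q)) :
    FromState (endState s ρ) (revPath ρ) := by
  rcases List.eq_nil_or_concat ρ with rfl | ⟨l, a, rfl⟩
  · trivial
  · rw [List.concat_eq_append, endState_concat, revPath_concat]
    rfl

lemma endState_revPath (h : FromState s ρ) : endState (endState s ρ) (revPath ρ) = s := by
  cases ρ with
  | nil => rfl
  | cons a l =>
    rw [revPath_cons, endState_concat]
    exact h

end Paths

lemma ofNatVec_nonneg (v : Fin d → ℕ) : 0 ≤ ofNatVec v :=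
  fun j => Int.natCast_nonneg (v j)

lemma ofNatVec_le_ofNatVec {v w : Fin d → ℕ} : ofNatVec v ≤ ofNatVec w ↔ v ≤ w := by
  simp only [Pi.le_def, ofNatVec, Nat.cast_le]

lemma ofNatVec_injective : Function.Injective (ofNatVec (d := d)) :=
  fun _ _ h => funext fun j => Int.ofNat_inj.1 (congrFun h j)

lemma le_ofNatVec_mstep (v : Fin d → ℕ) (z : Fin d → ℤ) :
    ofNatVec v + z ≤ ofNatVec (mstep v z) :=
  fun _ => Int.self_le_toNat _

lemma ofNatVec_mstep {v : Fin d → ℕ} {z : Fin d → ℤ} (h : 0 ≤ ofNatVec v + z) :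
    ofNatVec (mstep v z) = ofNatVec v + z :=
  funext fun j => Int.toNat_of_nonneg (h j)

lemma mstep_mono {v v' : Fin d → ℕ} (h : v ≤ v') (z : Fin d → ℤ) : mstep v z ≤ mstep v' z :=
  fun j => Int.toNat_le_toNat (by simpa using h j)

lemma mstep_eq_zero_of_not_nonneg {v : Fin 1 → ℕ} {z : Fin 1 → ℤ}
    (h : ¬ 0 ≤ ofNatVec v + z) : mstep v z = 0 := by
  funext i
  refine Int.toNat_of_nonpos (le_of_not_ge fun hi => h fun j => ?_)
  rwa [Subsingleton.elim j i]

section Runs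

variable {u : Fin d → ℤ} {v : Fin d → ℕ} {a : VTrans d Q} {l l₁ l₂ ρ : List (VTrans d Q)}

@[simp] lemma zrun_zero : zrun u ρ 0 = u := by simp [zrun]

lemma zrun_cons_succ (i : ℕ) : zrun u (a :: l) (i + 1) = zrun (u + a.2.1) l i := by
  simp [zrun, add_assoc]

lemma zrun_append_of_le {i : ℕ} (h : i ≤ l₁.length) : zrun u (l₁ ++ l₂) i = zrun u l₁ i := by
  simp [zrun, List.take_append_of_le_length h]

@[simp] lemma zend_nil : zend u ([] : List (VTrans d Q)) = u := by simp [zend]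

lemma zend_cons : zend u (a :: l) = zend (u + a.2.1) l := zrun_cons_succ _

lemma zend_concat : zend u (l ++ [a]) = zend u l + a.2.1 := by
  simp [zend, zrun, add_assoc]

lemma mend_eq_foldl : mend v ρ = ρ.foldl (fun u t => mstep u t.2.1) v := by
  rw [mend, mrun, List.take_length]

@[simp] lemma mend_nil : mend v ([] : List (VTrans d Q)) = v := rfl

lemma mend_cons : mend v (a :: l) = mend (mstep v a.2.1) l := by
  simp [mend_eq_foldl]

lemma mend_append : mend v (l₁ ++ l₂) = mend (mend v l₁) l₂ := by
  simp [mend_eq_foldl]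

lemma mend_mono {v v' : Fin d → ℕ} (h : v ≤ v') (ρ : List (VTrans d Q)) :
    mend v ρ ≤ mend v' ρ := by
  induction ρ generalizing v v' with
  | nil => exact h
  | cons a l ih => simpa only [mend_cons] using ih (mstep_mono h a.2.1)

@[simp] lemma classicalOK_nil : ClassicalOK v ([] : List (VTrans d Q)) := by
  intro i hi j
  simp [Nat.le_zero.1 hi, ofNatVec]

lemma classicalOK_cons :
    ClassicalOK v (a :: l) ↔ 0 ≤ ofNatVec v + a.2.1 ∧ ClassicalOK (mstep v a.2.1) l := by
  constructor
  · intro h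
    have hstep : 0 ≤ ofNatVec v + a.2.1 := fun j => by
      simpa [zrun_cons_succ] using h 1 (by simp) j
    refine ⟨hstep, fun i hi => ?_⟩
    simpa [ClassicalOK, ofNatVec_mstep hstep, zrun_cons_succ] using h (i + 1) (by simpa using hi)
  · rintro ⟨hstep, h⟩ (_ | i) hi j
    · simpa using ofNatVec_nonneg v j
    · simpa [ofNatVec_mstep hstep, zrun_cons_succ] using h i (by simpa using hi) j

lemma ClassicalOK.concat (h : ClassicalOK v l) (hstep : 0 ≤ zend (ofNatVec v) l + a.2.1) :
    ClassicalOK v (l ++ [a]) := by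
  intro i hi j
  rcases Nat.lt_or_ge l.length i with hlt | hle
  · obtain rfl : i = l.length + 1 := by simp at hi; omega
    have hlast : zrun (ofNatVec v) (l ++ [a]) (l.length + 1) = zend (ofNatVec v) (l ++ [a]) := by
      simp [zend]
    simpa [hlast, zend_concat] using hstep j
  · rw [zrun_append_of_le hle]
    exact h i hle j

lemma ClassicalOK.ofNatVec_mend (h : ClassicalOK v ρ) :
    ofNatVec (mend v ρ) = zend (ofNatVec v) ρ := by
  induction ρ generalizing v with
  | nil => simp
  | cons a l ih =>
    obtain ⟨hstep, h⟩ := classicalOK_cons.1 h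
    rw [mend_cons, zend_cons, ih h, ofNatVec_mstep hstep]

lemma classicalOK_revPath_and_le_zend (v : Fin d → ℕ) (ρ : List (VTrans d Q)) :
    ClassicalOK (mend v ρ) (revPath ρ) ∧
      ofNatVec v ≤ zend (ofNatVec (mend v ρ)) (revPath ρ) := by
  induction ρ generalizing v with
  | nil => simp [revPath]
  | cons a l ih =>
    obtain ⟨hok, hle⟩ := ih (mstep v a.2.1)
    have hback : ofNatVec v ≤ zend (ofNatVec (mend v (a :: l))) (revPath l) - a.2.1 := by
      rw [le_sub_iff_add_le, mend_cons]
      exact (le_ofNatVec_mstep v a.2.1).trans hle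
    rw [revPath_cons, zend_concat]
    refine ⟨ClassicalOK.concat (by rwa [mend_cons]) ?_, ?_⟩
    · simpa [flipTrans, sub_eq_add_neg] using (ofNatVec_nonneg v).trans hback
    · simpa [flipTrans, sub_eq_add_neg] using hback

end Runs

section Reach

variable {V : VASS d Q} {s q t : Q} {v u w : Fin d → ℕ}

lemma classicalReach_iff : ClassicalReach V s v t w ↔
    ∃ ρ, PathIn V ρ ∧ FromState s ρ ∧ endState s ρ = t ∧ ClassicalOK v ρ ∧ mend v ρ = w := by
  refine exists_congr fun ρ => and_congr_right fun _ => and_congr_right fun _ =>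
    and_congr_right fun _ => and_congr_right fun hok => ?_
  rw [← hok.ofNatVec_mend]
  exact ofNatVec_injective.eq_iff

lemma ClassicalReach.monusReach (h : ClassicalReach V s v t w) : MonusReach V s v t w := by
  obtain ⟨ρ, hρ, hs, ht, -, hw⟩ := classicalReach_iff.1 h
  exact ⟨ρ, hρ, hs, ht, hw⟩

lemma ClassicalCover.monusCover (h : ClassicalCover V s v t w) : MonusCover V s v t w :=
  let ⟨w', hw, hreach⟩ := h
  ⟨w', hw, hreach.monusReach⟩

lemma MonusCover.mono_left (h : MonusCover V s v t w) (hv : v ≤ u) : MonusCover V s u t w := by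
  obtain ⟨_, hw, ρ, hρ, hs, ht, rfl⟩ := h
  exact ⟨_, hw.trans (mend_mono hv ρ), ρ, hρ, hs, ht, rfl⟩

lemma MonusReach.trans_monusCover (h₁ : MonusReach V s v q u) (h₂ : MonusCover V q u t w) :
    MonusCover V s v t w := by
  obtain ⟨ρ₁, hρ₁, hs, rfl, rfl⟩ := h₁
  obtain ⟨_, hw, ρ₂, hρ₂, hq, rfl, rfl⟩ := h₂
  exact ⟨_, hw, ρ₁ ++ ρ₂, hρ₁.append hρ₂ hq, hs.append hq, endState_append, mend_append⟩

lemma monusReach_revPath {σ : List (VTrans d Q)} (hσ : PathIn (revV V) σ) (hq : FromState q σ) :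
    MonusReach V (endState q σ) v q (mend v (revPath σ)) := by
  refine ⟨revPath σ, ?_, fromState_revPath q σ, endState_revPath hq, rfl⟩
  simpa only [revV_revV] using hσ.revPath

lemma classicalCover_revV_of_mend_eq_zero {ρ : List (VTrans d Q)} (hρ : PathIn V ρ)
    (hs : FromState s ρ) (h0 : mend v ρ = 0) : ClassicalCover (revV V) (endState s ρ) 0 s v := by
  obtain ⟨hok, hle⟩ := classicalOK_revPath_and_le_zend v ρ
  rw [h0] at hok hle
  refine ⟨_, ?_, classicalReach_iff.2
    ⟨revPath ρ, hρ.revPath, fromState_revPath s ρ, endState_revPath hs, hok, rfl⟩⟩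
  rwa [← ofNatVec_le_ofNatVec, hok.ofNatVec_mend]

end Reach

lemma classicalOK_or_exists_append_mend_eq_zero (v : Fin 1 → ℕ) (ρ : List (VTrans 1 Q)) :
    ClassicalOK v ρ ∨ ∃ ρ₁ ρ₂, ρ = ρ₁ ++ ρ₂ ∧ mend v ρ₁ = 0 ∧ ClassicalOK 0 ρ₂ := by
  induction ρ generalizing v with
  | nil => exact Or.inl classicalOK_nil
  | cons a l ih =>
    rcases ih (mstep v a.2.1) with hok | ⟨ρ₁, ρ₂, rfl, h0, hok⟩
    · by_cases hstep : 0 ≤ ofNatVec v + a.2.1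
      · exact Or.inl (classicalOK_cons.2 ⟨hstep, hok⟩)
      · have hzero := mstep_eq_zero_of_not_nonneg hstep
        exact Or.inr ⟨[a], l, rfl, by rw [mend_cons, hzero, mend_nil], hzero ▸ hok⟩
    · exact Or.inr ⟨a :: ρ₁, ρ₂, rfl, by rwa [mend_cons], hok⟩

/-- (Characterization of monus coverability in 1-VASS.)
`t(n)` is monus coverable from `s(m)` in `V` iff `t(n)` is classically coverable
from `s(m)` in `V`, or there is a state `q` such that `t(n)` is classically
coverable from `q(0)` in `V` and `s(m)` is classically coverable from `q(0)`
in `rev(V)`. -/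
theorem stmt15 {Q : Type*} (V : VASS 1 Q) (s t : Q) (m n : ℕ) :
    MonusCover V s (fun _ => m) t (fun _ => n) ↔
    (ClassicalCover V s (fun _ => m) t (fun _ => n) ∨
     ∃ q : Q, ClassicalCover V q 0 t (fun _ => n) ∧
       ClassicalCover (revV V) q 0 s (fun _ => m)) := by
  constructor
  · rintro ⟨w, hw, ρ, hρ, hs, rfl, rfl⟩
    rcases classicalOK_or_exists_append_mend_eq_zero (fun _ => m) ρ with
      hok | ⟨ρ₁, ρ₂, rfl, h0, hok⟩
    · exact Or.inl ⟨_, hw, classicalReach_iff.2 ⟨ρ, hρ, hs, rfl, hok, rfl⟩⟩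
    · refine Or.inr ⟨endState s ρ₁, ⟨_, hw, classicalReach_iff.2 ⟨ρ₂, hρ.of_append_right,
        hs.endState_of_append hρ.1, endState_append.symm, hok, by rw [mend_append, h0]⟩⟩,
        classicalCover_revV_of_mend_eq_zero hρ.of_append_left hs.of_append h0⟩
  · rintro (hcov | ⟨q, hcov, _, -, hrev⟩)
    · exact hcov.monusCover
    · obtain ⟨σ, hσ, hq, rfl, -⟩ := hrev
      exact (monusReach_revPath hσ hq).trans_monusCover
        (hcov.monusCover.mono_left fun _ => Nat.zero_le _)
end

section
/- Let a_1,…,a_n,a∈ℕ and let V be the 1-VASS with states q_0,q_1,…,q_{n+1},q_f and transitions: (q_0,1,q_1); for each 1≤i≤n both (q_i,a_i,q_{i+1}) and (q_i,0,q_{i+1}); and (q_{n+1},−a,q_f). Then q_0(0)⇝*q_f(1) in V (monus semantics) if and only if there exists (x_1,…,x_n)∈{0,1}^n with x_1a_1+⋯+x_na_n=a. -/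
variable {d : ℕ} {Q : Type*}

/-- The 1-VASS for the subset-sum reduction: states `q_0, q_1, …, q_{n+1}`
(encoded as `Sum.inl i` for `i : Fin (n+2)`) and `q_f` (encoded as `Sum.inr ()`),
with transitions `(q_0, 1, q_1)`; for each `1 ≤ i ≤ n` both `(q_i, a_i, q_{i+1})`
and `(q_i, 0, q_{i+1})`; and `(q_{n+1}, -a, q_f)`. -/
def ssVASS1 (n : ℕ) (as : Fin n → ℕ) (a : ℕ) : VASS 1 (Fin (n + 2) ⊕ Unit) :=
  ⟨{tr | tr = (Sum.inl ⟨0, by omega⟩, (fun _ => (1 : ℤ)), Sum.inl ⟨1, by omega⟩) ∨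
         (∃ i : Fin n, tr = (Sum.inl ⟨(i : ℕ) + 1, by have := i.isLt; omega⟩,
            (fun _ => (as i : ℤ)),
            Sum.inl ⟨(i : ℕ) + 2, by have := i.isLt; omega⟩)) ∨
         (∃ i : Fin n, tr = (Sum.inl ⟨(i : ℕ) + 1, by have := i.isLt; omega⟩,
            (fun _ => (0 : ℤ)),
            Sum.inl ⟨(i : ℕ) + 2, by have := i.isLt; omega⟩)) ∨
         tr = (Sum.inl ⟨n + 1, by omega⟩, (fun _ => -(a : ℤ)), Sum.inr ())}⟩

/-!
Starting from `q_0(0)` the counter is `1` at `q_1`, and every middle transition adds `a_i` or `0`,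
so no truncation happens before the last transition: a path choosing `x ∈ {0,1}^n` reaches
`q_{n+1}` with counter `1 + ∑ xᵢ aᵢ`, and then `q_f` with counter `1 + ∑ xᵢ aᵢ - a` (truncated).
This is `1` exactly when `∑ xᵢ aᵢ = a`; the target value `1` rather than `0` is what excludes
sums smaller than `a`. The induction runs backwards from `q_f` over the layers, for an arbitrary
counter value.
-/

@[simp]
lemma mend_cons_s17 (v : Fin d → ℕ) (t : VTrans d Q) (ρ : List (VTrans d Q)) :
    mend v (t :: ρ) = mend (mstep v t.2.1) ρ := by
  simp [mend, mrun]

@[simp]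
lemma endState_cons (s : Q) (t : VTrans d Q) (ρ : List (VTrans d Q)) :
    endState s (t :: ρ) = endState t.2.2 ρ := by
  simp only [endState, List.map_cons, List.getLastD_cons]

@[simp]
lemma mstep_zero (v : Fin d → ℕ) : mstep v 0 = v := by
  ext; simp [mstep]

lemma mstep_const_natCast (v c : ℕ) :
    mstep (fun _ : Fin d => v) (fun _ => (c : ℤ)) = fun _ => v + c := by
  ext; simp only [mstep]; omega

lemma mstep_const_neg_natCast (v c : ℕ) :
    mstep (fun _ : Fin d => v) (fun _ => -(c : ℤ)) = fun _ => v - c := by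
  ext; simp [mstep]; omega

lemma monusReach_iff_of_ne {V : VASS d Q} {s t : Q} (hst : s ≠ t) {v w : Fin d → ℕ} :
    MonusReach V s v t w ↔ ∃ z s', (s, z, s') ∈ V.Δ ∧ MonusReach V s' (mstep v z) t w := by
  constructor
  · rintro ⟨_ | ⟨⟨p, z, s'⟩, ρ⟩, ⟨hchain, hmem⟩, hfrom, hend, hmend⟩
    · exact absurd hend hst
    obtain rfl : p = s := hfrom
    refine ⟨z, s', hmem _ List.mem_cons_self, ρ,
      ⟨hchain.tail, fun t ht => hmem t (List.mem_cons_of_mem _ ht)⟩, ?_,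
      by simpa using hend, by simpa using hmend⟩
    cases ρ with
    | nil => trivial
    | cons t ρ => exact (List.isChain_cons_cons.mp hchain).1.symm
  · rintro ⟨z, s', hΔ, ρ, ⟨hchain, hmem⟩, hfrom, hend, hmend⟩
    refine ⟨(s, z, s') :: ρ, ⟨?_, List.forall_mem_cons.mpr ⟨hΔ, hmem⟩⟩, rfl,
      by simpa using hend, by simpa using hmend⟩
    cases ρ with
    | nil => exact List.isChain_singleton _
    | cons t ρ => exact List.IsChain.cons_cons hfrom.symm hchain

lemma monusReach_self_iff_of_forall_notMem {V : VASS d Q} {t : Q}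
    (ht : ∀ z s', (t, z, s') ∉ V.Δ) {v w : Fin d → ℕ} :
    MonusReach V t v t w ↔ v = w := by
  constructor
  · rintro ⟨_ | ⟨⟨p, z, s'⟩, ρ⟩, hpath, hfrom, -, hmend⟩
    · exact hmend
    obtain rfl : p = t := hfrom
    exact absurd (hpath.2 _ List.mem_cons_self) (ht z s')
  · rintro rfl
    exact ⟨[], ⟨List.isChain_nil, by simp⟩, trivial, rfl, rfl⟩

lemma sum_update_mul_of_eq_zero {ι R : Type*} [Fintype ι] [DecidableEq ι]
    [NonUnitalNonAssocSemiring R] {x : ι → R} {j : ι} (hj : x j = 0) (b : R) (y : ι → R) :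
    ∑ i, Function.update x j b i * y i = b * y j + ∑ i, x i * y i := by
  rw [Fintype.sum_eq_add_sum_compl j, Fintype.sum_eq_add_sum_compl j (fun i => x i * y i)]
  simp only [Function.update_self, hj, zero_mul, zero_add]
  congr 1
  exact Finset.sum_congr rfl fun i hi => by
    rw [Function.update_of_ne (by simpa using hi)]

def IsSubsetSumFrom {n : ℕ} (as : Fin n → ℕ) (k s : ℕ) : Prop :=
  ∃ x : Fin n → ℕ, (∀ i, x i ≤ 1) ∧ (∀ i : Fin n, (i : ℕ) < k → x i = 0) ∧ ∑ i, x i * as i = s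

section SubsetSum

variable {n : ℕ} {as : Fin n → ℕ}

lemma isSubsetSumFrom_zero_iff {s : ℕ} :
    IsSubsetSumFrom as 0 s ↔ ∃ x : Fin n → ℕ, (∀ i, x i ≤ 1) ∧ ∑ i, x i * as i = s := by
  simp [IsSubsetSumFrom]

lemma isSubsetSumFrom_self_iff {s : ℕ} : IsSubsetSumFrom as n s ↔ s = 0 := by
  constructor
  · rintro ⟨x, -, hx0, rfl⟩
    simp [hx0 _ (Fin.is_lt _)]
  · rintro rfl
    exact ⟨0, by simp, fun _ _ => rfl, by simp⟩

lemma isSubsetSumFrom_iff_succ {k s : ℕ} (hk : k < n) :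
    IsSubsetSumFrom as k s ↔
      (∃ s', IsSubsetSumFrom as (k + 1) s' ∧ s = as ⟨k, hk⟩ + s') ∨
        IsSubsetSumFrom as (k + 1) s := by
  set j : Fin n := ⟨k, hk⟩
  have below_succ {x : Fin n → ℕ} (hx0 : ∀ i : Fin n, (i : ℕ) < k → x i = 0) (hxj : x j = 0) :
      ∀ i : Fin n, (i : ℕ) < k + 1 → x i = 0 := fun i hi => by
    rcases Nat.lt_succ_iff_lt_or_eq.mp hi with hi | hi
    · exact hx0 i hi
    · rwa [show i = j from Fin.ext hi]
  constructor
  · rintro ⟨x, hx1, hx0, rfl⟩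
    obtain hxj | hxj := Nat.le_one_iff_eq_zero_or_eq_one.mp (hx1 j)
    · exact Or.inr ⟨x, hx1, below_succ hx0 hxj, rfl⟩
    refine Or.inl ⟨_, ⟨Function.update x j 0, fun i => ?_, below_succ (fun i hi => ?_) (by simp),
      rfl⟩, ?_⟩
    · rcases eq_or_ne i j with rfl | h <;> simp [*]
    · rw [Function.update_of_ne (fun h => by simp [h, j] at hi)]
      exact hx0 i hi
    · rw [← one_mul (as j), ← sum_update_mul_of_eq_zero (Function.update_self j 0 x),
        Function.update_idem, ← hxj, Function.update_eq_self]
  · rintro (⟨_, ⟨x, hx1, hx0, rfl⟩, rfl⟩ | ⟨x, hx1, hx0, rfl⟩)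
    · have hxj : x j = 0 := hx0 j (Nat.lt_succ_self k)
      refine ⟨Function.update x j 1, fun i => ?_, fun i hi => ?_, ?_⟩
      · rcases eq_or_ne i j with rfl | h <;> simp [*]
      · rw [Function.update_of_ne (fun h => by simp [h, j] at hi)]
        exact hx0 i (by omega)
      · rw [sum_update_mul_of_eq_zero hxj, one_mul]
    · exact ⟨x, hx1, fun i hi => hx0 i (by omega), rfl⟩

end SubsetSum

section SubsetSumVASS

variable {n : ℕ} {as : Fin n → ℕ} {a : ℕ} {z : Fin 1 → ℤ} {s' : Fin (n + 2) ⊕ Unit}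

lemma ssVASS1_mem_Δ_start_iff :
    (Sum.inl ⟨0, by omega⟩, z, s') ∈ (ssVASS1 n as a).Δ ↔
      z = (fun _ => 1) ∧ s' = Sum.inl ⟨1, by omega⟩ := by
  simp [ssVASS1, Fin.ext_iff]

lemma ssVASS1_mem_Δ_layer_iff {k : ℕ} (hk : k < n) :
    (Sum.inl ⟨k + 1, by omega⟩, z, s') ∈ (ssVASS1 n as a).Δ ↔
      (z = (fun _ => (as ⟨k, hk⟩ : ℤ)) ∨ z = 0) ∧
        s' = Sum.inl ⟨k + 1 + 1, by omega⟩ := by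
  simp only [ssVASS1, Set.mem_ofPred_eq, Prod.mk.injEq, Sum.inl.injEq, Fin.ext_iff,
    Nat.add_right_cancel_iff, hk.ne, Nat.add_eq_zero_iff, one_ne_zero, and_false, false_and,
    or_false, false_or]
  constructor
  · rintro (⟨i, rfl, rfl, rfl⟩ | ⟨i, rfl, rfl, rfl⟩) <;> simp [Pi.zero_def]
  · rintro ⟨rfl | rfl, rfl⟩
    exacts [Or.inl ⟨⟨k, hk⟩, rfl, rfl, rfl⟩, Or.inr ⟨⟨k, hk⟩, rfl, rfl, rfl⟩]

lemma ssVASS1_mem_Δ_last_iff :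
    (Sum.inl ⟨n + 1, by omega⟩, z, s') ∈ (ssVASS1 n as a).Δ ↔
      z = (fun _ => -(a : ℤ)) ∧ s' = Sum.inr () := by
  simp [ssVASS1, Fin.ext_iff, fun i : Fin n => i.is_lt.ne']

lemma ssVASS1_notMem_Δ_final (z : Fin 1 → ℤ) (s' : Fin (n + 2) ⊕ Unit) :
    (Sum.inr (), z, s') ∉ (ssVASS1 n as a).Δ := by
  simp [ssVASS1]

lemma ssVASS1_monusReach_final_iff {k : ℕ} (hk : k ≤ n) (v w : ℕ) :
    MonusReach (ssVASS1 n as a) (Sum.inl ⟨k + 1, by omega⟩) (fun _ => v) (Sum.inr ())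
        (fun _ => w) ↔
      ∃ s, IsSubsetSumFrom as k s ∧ w = v + s - a := by
  induction hk using Nat.decreasingInduction generalizing v with
  | self =>
    rw [monusReach_iff_of_ne Sum.inl_ne_inr]
    simp only [ssVASS1_mem_Δ_last_iff, Sum.exists, reduceCtorEq, and_false, false_and,
      exists_const, and_true, monusReach_self_iff_of_forall_notMem ssVASS1_notMem_Δ_final,
      false_or, exists_eq_left, mstep_const_neg_natCast, isSubsetSumFrom_self_iff, add_zero]
    exact Function.const_inj.trans eq_comm
  | of_succ k hk ih =>
    rw [monusReach_iff_of_ne Sum.inl_ne_inr]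
    simp [ssVASS1_mem_Δ_layer_iff hk, or_and_right, exists_or, mstep_const_natCast, ih,
      isSubsetSumFrom_iff_succ hk, add_assoc]

end SubsetSumVASS

/-- In the 1-VASS above, `q_0(0) ⇝* q_f(1)` (monus semantics)
iff there is `(x_1,…,x_n) ∈ {0,1}^n` with `x_1a_1 + ⋯ + x_na_n = a`. -/
theorem stmt17 (n : ℕ) (as : Fin n → ℕ) (a : ℕ) :
    MonusReach (ssVASS1 n as a) (Sum.inl ⟨0, by omega⟩) (fun _ => 0)
      (Sum.inr ()) (fun _ => 1) ↔
    ∃ x : Fin n → ℕ, (∀ i, x i ≤ 1) ∧ ∑ i, x i * as i = a := by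
  have hstart : mstep (fun _ : Fin 1 => 0) (fun _ => 1) = fun _ => 1 := rfl
  have hfinal (s : ℕ) : 1 = 1 + s - a ↔ s = a := by omega
  rw [monusReach_iff_of_ne Sum.inl_ne_inr]
  simp only [ssVASS1_mem_Δ_start_iff, and_assoc, exists_and_left, exists_eq_left, hstart]
  rw [ssVASS1_monusReach_final_iff (k := 0) n.zero_le]
  simp only [hfinal, exists_eq_right, isSubsetSumFrom_zero_iff]
end
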